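/- arXiv:2503.02211 — 2 statements merged into one kernel-verified Lean document; each statement's English description precedes it below -/
import Mathlib

section
/- Let α₂, α₃ ∈ ℝ with 0 < α₂ < α₃, and define ω₊ = (√(4+α₃²−α₂²) + √(α₃²−α₂²))/2, ω₋ = 1/ω₊, τⱼ⁺ = (2π − arccos(α₂/α₃) + 2πj)/ω₊ and τⱼ⁻ = (arccos(α₂/α₃) + 2πj)/ω₋ for j ∈ ℕ. Then λ = iω₊ is a root of λ² + α₂λ + 1 − α₃λe^{−λτⱼ⁺} = 0 and λ = iω₋ is a root of λ² + α₂λ + 1 − α₃λe^{−λτⱼ⁻} = 0, for each j. -/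
/-!
Writing `e^{-iωτ} = cos ωτ - i sin ωτ`, the equation `h(iω, τ) = 0` splits into
`α₃ cos ωτ = α₂` and `α₃ ω sin ωτ = 1 - ω²`. With `θ = arccos (α₂/α₃)` one has
`α₃ cos θ = α₂` and `α₃ sin θ = √(α₃² - α₂²) =: s`. The frequency `ω₊` is the positive root of
`ω² - sω - 1 = 0`, so `1 - ω₊² = -s ω₊ = α₃ ω₊ sin (2π - θ)`, and its reciprocal `ω₋` satisfies
`1 - ω₋² = s ω₋ = α₃ ω₋ sin θ`. The delays `τⱼ^±` make `ω τ` equal to these angles modulo `2π`.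
-/

open Complex

/-- The characteristic function `h(λ, τ)` of the linearized footbridge delay equation. -/
noncomputable def footbridgeChar (α₂ α₃ τ : ℝ) (z : ℂ) : ℂ :=
  z ^ 2 + α₂ * z + 1 - α₃ * z * exp (-z * τ)

lemma exp_neg_I_mul_mul (ω τ : ℝ) :
    exp (-(I * ω) * τ) = Real.cos (ω * τ) - Real.sin (ω * τ) * I := by
  rw [show -(I * ω) * τ = ((-(ω * τ) : ℝ) : ℂ) * I by push_cast; ring, exp_mul_I,
    ofReal_neg, cos_neg, sin_neg, ← ofReal_cos, ← ofReal_sin]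
  ring

lemma footbridgeChar_I_mul_eq_zero {α₂ α₃ ω τ : ℝ}
    (hc : α₃ * Real.cos (ω * τ) = α₂) (hs : α₃ * ω * Real.sin (ω * τ) = 1 - ω ^ 2) :
    footbridgeChar α₂ α₃ τ (I * ω) = 0 := by
  have hc' : (α₃ : ℂ) * Real.cos (ω * τ) = α₂ := by exact_mod_cast hc
  have hs' : (α₃ : ℂ) * ω * Real.sin (ω * τ) = 1 - (ω : ℂ) ^ 2 := by exact_mod_cast hs
  rw [footbridgeChar, exp_neg_I_mul_mul]
  linear_combination -hs' - I * ω * hc' + (ω * α₃ * Real.sin (ω * τ) + ω ^ 2 : ℂ) * I_sq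

lemma footbridgeChar_I_mul_eq_zero_of_angle {α₂ α₃ ω φ : ℝ} (hω : ω ≠ 0)
    (hc : α₃ * Real.cos φ = α₂) (hs : α₃ * ω * Real.sin φ = 1 - ω ^ 2) (j : ℤ) :
    footbridgeChar α₂ α₃ ((φ + 2 * Real.pi * j) / ω) (I * ω) = 0 := by
  have hangle : ω * ((φ + 2 * Real.pi * j) / ω) = φ + j * (2 * Real.pi) := by
    field_simp
  apply footbridgeChar_I_mul_eq_zero
  · rwa [hangle, Real.cos_add_int_mul_two_pi]
  · rwa [hangle, Real.sin_add_int_mul_two_pi]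

lemma mul_cos_arccos_div {a b : ℝ} (hb : 0 < b) (hab : |a| ≤ b) :
    b * Real.cos (Real.arccos (a / b)) = a := by
  obtain ⟨hlo, hhi⟩ := abs_le.mp hab
  rw [Real.cos_arccos ((le_div_iff₀ hb).mpr (by linarith)) ((div_le_one hb).mpr hhi)]
  field_simp

lemma mul_sin_arccos_div {a b : ℝ} (hb : 0 < b) :
    b * Real.sin (Real.arccos (a / b)) = √(b ^ 2 - a ^ 2) := by
  rw [Real.sin_arccos, show 1 - (a / b) ^ 2 = (b ^ 2 - a ^ 2) / b ^ 2 by field_simp,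
    Real.sqrt_div' _ (sq_nonneg b), Real.sqrt_sq hb.le]
  field_simp

section Frequencies

variable {d ω : ℝ}

lemma pos_of_eq_half_sqrt_add_sqrt (hd : 0 ≤ d) (hω : ω = (√(4 + d) + √d) / 2) : 0 < ω := by
  have : 0 < √(4 + d) := Real.sqrt_pos.mpr (by linarith)
  rw [hω]
  positivity

lemma sq_sub_one_of_eq_half_sqrt_add_sqrt (hd : 0 ≤ d) (hω : ω = (√(4 + d) + √d) / 2) :
    ω ^ 2 - 1 = √d * ω := by
  have h4 : √(4 + d) ^ 2 = 4 + d := Real.sq_sqrt (by linarith)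
  have h0 : √d ^ 2 = d := Real.sq_sqrt hd
  rw [hω]
  linear_combination h4 / 4 - h0 / 4

lemma one_sub_inv_sq_of_sq_sub_one {s : ℝ} (hω : ω ≠ 0) (h : ω ^ 2 - 1 = s * ω) :
    1 - (1 / ω) ^ 2 = s * (1 / ω) := by
  field_simp
  linear_combination h

end Frequencies

theorem critical_delays_give_imaginary_roots (α₂ α₃ : ℝ) (h2 : 0 < α₂) (h23 : α₂ < α₃)
    (ωp ωm : ℝ)
    (hp : ωp = (Real.sqrt (4 + α₃^2 - α₂^2) + Real.sqrt (α₃^2 - α₂^2)) / 2)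
    (hm : ωm = 1 / ωp) (j : ℕ) :
    (let τ : ℝ := (2 * Real.pi - Real.arccos (α₂ / α₃) + 2 * Real.pi * j) / ωp
     (Complex.I * ωp)^2 + α₂ * (Complex.I * ωp) + 1
       - α₃ * (Complex.I * ωp) * Complex.exp (-(Complex.I * ωp) * τ) = 0) ∧
    (let τ : ℝ := (Real.arccos (α₂ / α₃) + 2 * Real.pi * j) / ωm
     (Complex.I * ωm)^2 + α₂ * (Complex.I * ωm) + 1
       - α₃ * (Complex.I * ωm) * Complex.exp (-(Complex.I * ωm) * τ) = 0) := by
  have hα₃ : 0 < α₃ := h2.trans h23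
  have hd : 0 ≤ α₃ ^ 2 - α₂ ^ 2 := by nlinarith
  rw [add_sub_assoc] at hp
  have hωp_pos := pos_of_eq_half_sqrt_add_sqrt hd hp
  have hωp := sq_sub_one_of_eq_half_sqrt_add_sqrt hd hp
  have hωm := hm ▸ one_sub_inv_sq_of_sq_sub_one hωp_pos.ne' hωp
  have hcos := mul_cos_arccos_div hα₃ (abs_le.mpr ⟨by linarith, h23.le⟩)
  have hsin := mul_sin_arccos_div (a := α₂) hα₃
  set θ := Real.arccos (α₂ / α₃)
  have hωm_pos : 0 < ωm := by rw [hm]; positivity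
  constructor
  · have hc : α₃ * Real.cos (2 * Real.pi - θ) = α₂ := by rwa [Real.cos_two_pi_sub]
    have hs : α₃ * ωp * Real.sin (2 * Real.pi - θ) = 1 - ωp ^ 2 := by
      rw [Real.sin_two_pi_sub]
      linear_combination -ωp * hsin + hωp
    have hroot := footbridgeChar_I_mul_eq_zero_of_angle hωp_pos.ne' hc hs j
    rwa [Int.cast_natCast] at hroot
  · have hroot := footbridgeChar_I_mul_eq_zero_of_angle hωm_pos.ne' hcos
      (by linear_combination ωm * hsin - hωm) j
    rwa [Int.cast_natCast] at hroot
end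

section
/- Let α₂, α₃ > 0 with α₃ < α₂. Then for every τ ≥ 0, the characteristic equation λ² + α₂λ + 1 − α₃λe^{−λτ} = 0 has no purely imaginary root. -/
/-! On the imaginary axis the imaginary part of the characteristic function factors as
`ω (α₂ - α₃ cos ωτ)`, and `|α₃ cos ωτ| ≤ α₃ < α₂` makes the second factor positive. -/

open Complex in
theorem im_delay_characteristic_I_mul (a b ω τ : ℝ) :
    ((I * ω) ^ 2 + (a : ℂ) * (I * ω) + 1 - (b : ℂ) * (I * ω) * exp (-(I * ω) * τ)).im
      = ω * (a - b * Real.cos (ω * τ)) := by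
  have hexp : exp (-(I * ω) * τ) = Real.cos (ω * τ) - Real.sin (ω * τ) * I := by
    rw [show -(I * ω) * τ = ((-(ω * τ) : ℝ) : ℂ) * I by push_cast; ring, exp_mul_I]
    push_cast
    rw [Complex.cos_neg, Complex.sin_neg]
    ring
  rw [hexp]
  simp only [sub_im, add_im, mul_im, mul_re, sq, I_re, I_im, ofReal_re, ofReal_im, one_im,
    sub_re]
  ring

theorem sub_mul_cos_pos {a b : ℝ} (hab : |b| < a) (x : ℝ) : 0 < a - b * Real.cos x := by
  have hcos : |b * Real.cos x| ≤ |b| := by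
    rw [abs_mul]
    exact mul_le_of_le_one_right (abs_nonneg b) (Real.abs_cos_le_one x)
  linarith [le_abs_self (b * Real.cos x)]

theorem no_purely_imaginary_root_general (α₂ α₃ : ℝ) (h3 : 0 < α₃)
    (h32 : α₃ < α₂) (τ : ℝ) :
    ∀ ω : ℝ, ω ≠ 0 →
      (Complex.I * ω)^2 + (α₂ : ℂ) * (Complex.I * ω) + 1
        - (α₃ : ℂ) * (Complex.I * ω) * Complex.exp (-(Complex.I * ω) * τ) ≠ 0 := by
  intro ω hω hroot
  have hfactor : ω * (α₂ - α₃ * Real.cos (ω * τ)) ≠ 0 :=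
    mul_ne_zero hω (sub_mul_cos_pos (by rwa [abs_of_pos h3]) _).ne'
  rw [← im_delay_characteristic_I_mul, hroot, Complex.zero_im] at hfactor
  exact hfactor rfl

theorem no_purely_imaginary_root (α₂ α₃ : ℝ) (h2 : 0 < α₂) (h3 : 0 < α₃)
    (h32 : α₃ < α₂) (τ : ℝ) (hτ : 0 ≤ τ) :
    ∀ ω : ℝ, ω ≠ 0 →
      (Complex.I * ω)^2 + (α₂ : ℂ) * (Complex.I * ω) + 1
        - (α₃ : ℂ) * (Complex.I * ω) * Complex.exp (-(Complex.I * ω) * τ) ≠ 0 :=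
  no_purely_imaginary_root_general α₂ α₃ h3 h32 τ
end
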